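/- A column C over [±n] is admissible (satisfies the one column condition) if and only if C can be split, i.e., the set J = {t_1 > ... > t_r} of Definition of splitting exists. -/

import Mathlib

/-- The alphabet `[±n] = {1 < 2 < ⋯ < n < n̄ < ⋯ < 1̄}` is encoded as `{1, …, 2n} ⊆ ℕ`
with the usual order, the barred letter `ī` being encoded as `2n+1-i`. -/
def bar (n x : ℕ) : ℕ := 2 * n + 1 - x

/-- A column over `[±n]`: a strictly increasing list with entries in `{1, …, 2n}`. -/
def IsColumn (n : ℕ) (C : List ℕ) : Prop :=
  C.Chain' (· < ·) ∧ ∀ x ∈ C, 1 ≤ x ∧ x ≤ 2 * n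

/-- The one column condition (1CC): for every unbarred `i` with both `i` and `ī` in `C`,
the number of entries `x` with `x ≤ i` or `x ≥ ī` is at most `i`. -/
def OCC (n : ℕ) (C : List ℕ) : Prop :=
  ∀ i, 1 ≤ i → i ≤ n → i ∈ C → bar n i ∈ C →
    C.countP (fun x => decide (x ≤ i ∨ bar n i ≤ x)) ≤ i

/-- The set `I` of unbarred letters `z` such that both `z` and `z̄` occur in `C`,
listed in decreasing order `z₁ > z₂ > ⋯ > z_r`. -/
def Ilist (n : ℕ) (C : List ℕ) : List ℕ :=
  ((List.range (n + 1)).filter (fun z => decide (1 ≤ z ∧ z ∈ C ∧ bar n z ∈ C))).reverse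

/-- The greatest unbarred letter `t < bound` with `t ∉ C` and `t̄ ∉ C`, if any. -/
def pickBelow (n : ℕ) (C : List ℕ) (bound : ℕ) : Option ℕ :=
  ((List.range bound).filter (fun t => decide (1 ≤ t ∧ t ≤ n ∧ t ∉ C ∧ bar n t ∉ C))).max?

/-- The greedy construction of the set `J = {t₁ > ⋯ > t_r}` of Definition of splitting:
`t₁` is the greatest letter `< z₁` with `t₁, t̄₁ ∉ C` and `tᵢ` is the greatest letter
`< min (tᵢ₋₁, zᵢ)` with `tᵢ, t̄ᵢ ∉ C`; returns `none` if at some stage no letter exists. -/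
def splitJ (n : ℕ) (C : List ℕ) : List ℕ → ℕ → Option (List ℕ)
  | [], _ => some []
  | z :: zs, bound =>
    match pickBelow n C (min bound z) with
    | none => none
    | some t => (splitJ n C zs t).map (t :: ·)

def JlistOpt (n : ℕ) (C : List ℕ) : Option (List ℕ) := splitJ n C (Ilist n C) (n + 1)

/-- `C` can be split: the set `J` of the splitting definition exists. -/
def CanSplit (n : ℕ) (C : List ℕ) : Prop := (JlistOpt n C).isSome = true

/-- The set `J = {t₁ > ⋯ > t_r}` (empty if `C` cannot be split). -/
def Jlist (n : ℕ) (C : List ℕ) : List ℕ := (JlistOpt n C).getD []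

def sortCol (L : List ℕ) : List ℕ := L.mergeSort (· ≤ ·)

/-- The right column `rC`: replace each barred `z̄ᵢ` (for `zᵢ ∈ I`) by `t̄ᵢ` and reorder. -/
def rCol (n : ℕ) (C : List ℕ) : List ℕ :=
  sortCol ((C.filter (fun x => decide (x ∉ (Ilist n C).map (bar n)))) ++ (Jlist n C).map (bar n))

/-- The left column `ℓC`: replace each unbarred `zᵢ ∈ I` by `tᵢ` and reorder. -/
def lCol (n : ℕ) (C : List ℕ) : List ℕ :=
  sortCol ((C.filter (fun x => decide (x ∉ Ilist n C))) ++ Jlist n C)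

/-- `Φ(C)`: the column of the same size whose unbarred entries are taken from `ℓC`
and whose barred entries are taken from `rC`. -/
def PhiCol (n : ℕ) (C : List ℕ) : List ℕ :=
  sortCol ((lCol n C).filter (fun x => decide (x ≤ n)) ++
    (rCol n C).filter (fun x => decide (n < x)))

/-!
Call an unbarred letter `t` free if neither `t` nor `t̄` occurs in `C`. For `z ∈ I`, sorting the
letters `a ≤ z` according to which of `a`, `ā` lie in `C` gives
`#{x ∈ C | x ≤ z ∨ z̄ ≤ x} + #{free t < z} = z + #{y ∈ I | y ≤ z}`,
so the 1CC says that for every `z ∈ I` at least `#{y ∈ I | y ≤ z}` free letters lie below `z`.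
This Hall-type condition is exactly what the greedy construction of `J` needs: taking `tᵢ` to be
the largest free letter below `min (tᵢ₋₁, zᵢ)` uses up one free letter and leaves all free letters
below `tᵢ` for the remaining `zⱼ < zᵢ`.
-/

open Finset

lemma Finset.card_filter_add_card_filter_add_card_filter_nor {α : Type*} (s : Finset α)
    (p q : α → Prop) [DecidablePred p] [DecidablePred q] :
    #{a ∈ s | p a} + #{a ∈ s | q a} + #{a ∈ s | ¬p a ∧ ¬q a} = #s + #{a ∈ s | p a ∧ q a} := by
  rw [card_filter, card_filter, card_filter, card_filter, card_eq_sum_ones, ← sum_add_distrib,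
    ← sum_add_distrib, ← sum_add_distrib]
  exact sum_congr rfl fun a _ => by by_cases p a <;> by_cases q a <;> simp_all

lemma List.Nodup.countP_eq_card_filter {α : Type*} [DecidableEq α] {l : List α} (hl : l.Nodup)
    (p : α → Bool) : l.countP p = #{a ∈ l.toFinset | p a} := by
  rw [List.countP_eq_length_filter, ← List.toFinset_card_of_nodup (hl.filter p),
    List.toFinset_filter]

lemma countP_le_cons_self {z : ℕ} {zs : List ℕ} (h : ∀ w ∈ zs, w < z) :
    (z :: zs).countP (· ≤ z) = zs.length + 1 := by
  rw [List.countP_cons, List.countP_eq_length.2 fun w hw => by simpa using (h w hw).le]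
  simp

lemma countP_le_cons_of_lt {z w : ℕ} {zs : List ℕ} (h : w < z) :
    (z :: zs).countP (· ≤ w) = zs.countP (· ≤ w) := by
  simp [not_le.2 h]

def IsFree (n : ℕ) (C : List ℕ) (t : ℕ) : Prop := 1 ≤ t ∧ t ≤ n ∧ t ∉ C ∧ bar n t ∉ C

instance (n : ℕ) (C : List ℕ) : DecidablePred (IsFree n C) :=
  fun _ => inferInstanceAs (Decidable (_ ∧ _ ∧ _ ∧ _))

def freeCount (n : ℕ) (C : List ℕ) (b : ℕ) : ℕ := #{t ∈ range b | IsFree n C t}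

section Greedy

variable {n : ℕ} {C : List ℕ}

lemma freeCount_mono : Monotone (freeCount n C) := fun _ _ h =>
  card_le_card (filter_subset_filter _ (range_subset_range.2 h))

lemma mem_pickBelow_list {b t : ℕ} :
    t ∈ (List.range b).filter (fun t => decide (1 ≤ t ∧ t ≤ n ∧ t ∉ C ∧ bar n t ∉ C)) ↔
      t < b ∧ IsFree n C t := by
  simp [IsFree]

lemma pickBelow_eq_none_iff {b : ℕ} : pickBelow n C b = none ↔ freeCount n C b = 0 := by
  simp only [pickBelow, List.max?_eq_none_iff, List.eq_nil_iff_forall_not_mem, mem_pickBelow_list,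
    freeCount, card_eq_zero, filter_eq_empty_iff, mem_range, not_and]

lemma freeCount_eq_succ_of_pickBelow_eq_some {b t : ℕ} (h : pickBelow n C b = some t) :
    freeCount n C b = freeCount n C t + 1 := by
  obtain ⟨⟨htb, ht⟩, hmax⟩ : (t < b ∧ IsFree n C t) ∧ ∀ a, a < b → IsFree n C a → a ≤ t := by
    simpa [IsFree] using List.max?_eq_some_iff.1 h
  have : {a ∈ range b | IsFree n C a} = insert t {a ∈ range t | IsFree n C a} := by
    ext a
    simp only [mem_filter, mem_range, mem_insert]
    constructor
    · rintro ⟨hab, ha⟩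
      exact (hmax a hab ha).eq_or_lt.imp id (⟨·, ha⟩)
    · rintro (rfl | ⟨hat, ha⟩)
      exacts [⟨htb, ht⟩, ⟨hat.trans htb, ha⟩]
  rw [freeCount, this, card_insert_of_notMem (by simp)]
  rfl

theorem isSome_splitJ_iff {zs : List ℕ} (hzs : zs.Pairwise (· > ·)) (b : ℕ) :
    (splitJ n C zs b).isSome ↔
      zs.length ≤ freeCount n C b ∧ ∀ z ∈ zs, zs.countP (· ≤ z) ≤ freeCount n C z := by
  induction zs generalizing b with
  | nil => simp [splitJ]
  | cons z zs ih =>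
    have hlt : ∀ w ∈ zs, w < z := fun w hw => List.rel_of_pairwise_cons hzs hw
    have hmin : freeCount n C (min b z) = min (freeCount n C b) (freeCount n C z) :=
      freeCount_mono.map_min
    rw [List.forall_mem_cons, countP_le_cons_self hlt, List.length_cons,
      forall₂_congr fun w hw => by rw [countP_le_cons_of_lt (hlt w hw)]]
    cases hpick : pickBelow n C (min b z) with
    | none =>
      have := pickBelow_eq_none_iff.1 hpick
      simp only [splitJ, hpick, Option.isSome_none, Bool.false_eq_true, false_iff]
      omega
    | some t =>
      have := freeCount_eq_succ_of_pickBelow_eq_some hpick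
      simp only [splitJ, hpick, Option.isSome_map, ih hzs.of_cons t, ← and_assoc]
      exact and_congr_left' (by omega)

lemma length_le_freeCount {zs : List ℕ} (hzs : zs.Pairwise (· > ·)) {b : ℕ} (hb : ∀ z ∈ zs, z < b)
    (h : ∀ z ∈ zs, zs.countP (· ≤ z) ≤ freeCount n C z) : zs.length ≤ freeCount n C b := by
  cases zs with
  | nil => simp
  | cons z zs =>
    have := h z List.mem_cons_self
    rw [countP_le_cons_self fun w hw => List.rel_of_pairwise_cons hzs hw] at this
    exact this.trans (freeCount_mono (hb z List.mem_cons_self).le)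

end Greedy

lemma mem_Ilist {n z : ℕ} {C : List ℕ} :
    z ∈ Ilist n C ↔ 1 ≤ z ∧ z ≤ n ∧ z ∈ C ∧ bar n z ∈ C := by
  simp only [Ilist, List.mem_reverse, List.mem_filter, List.mem_range, decide_eq_true_eq,
    Nat.lt_succ_iff]
  tauto

lemma Ilist_pairwise (n : ℕ) (C : List ℕ) : (Ilist n C).Pairwise (· > ·) := by
  rw [Ilist, List.pairwise_reverse]
  exact List.pairwise_lt_range.sublist List.filter_sublist

lemma canSplit_iff {n : ℕ} {C : List ℕ} :
    CanSplit n C ↔ ∀ z ∈ Ilist n C, (Ilist n C).countP (· ≤ z) ≤ freeCount n C z := by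
  rw [CanSplit, JlistOpt, isSome_splitJ_iff (Ilist_pairwise n C), and_iff_right_iff_imp]
  exact length_le_freeCount (Ilist_pairwise n C) fun z hz => Nat.lt_succ_of_le (mem_Ilist.1 hz).2.1

section Window

variable {n : ℕ} {C : List ℕ} {z : ℕ}

lemma bar_bar {x : ℕ} (h : x ≤ 2 * n + 1) : bar n (bar n x) = x := by
  unfold bar; omega

lemma IsColumn.nodup (hC : IsColumn n C) : C.Nodup :=
  (List.isChain_iff_pairwise.1 hC.1).imp ne_of_lt

lemma IsColumn.countP_window (hC : IsColumn n C) (hz : z ≤ n) :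
    C.countP (fun x => decide (x ≤ z ∨ bar n z ≤ x)) =
      #{a ∈ Icc 1 z | a ∈ C} + #{a ∈ Icc 1 z | bar n a ∈ C} := by
  rw [hC.nodup.countP_eq_card_filter]
  simp only [decide_eq_true_eq]
  rw [filter_or, card_union_of_disjoint (disjoint_filter.2 fun x _ h1 h2 => by
    unfold bar at h2; omega)]
  congr 1
  · congr 1
    ext x
    simp only [mem_filter, List.mem_toFinset, mem_Icc]
    exact ⟨fun ⟨hx, hxz⟩ => ⟨⟨(hC.2 x hx).1, hxz⟩, hx⟩, fun ⟨⟨_, hxz⟩, hx⟩ => ⟨hx, hxz⟩⟩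
  · refine card_nbij' (bar n) (bar n) ?_ ?_ ?_ ?_ <;> intro x hx <;>
      simp only [coe_filter, Set.mem_ofPred_eq, List.mem_toFinset, mem_Icc] at hx ⊢
    · obtain ⟨hxC, hzx⟩ := hx
      have := (hC.2 x hxC).2
      rw [bar_bar (by omega)]
      exact ⟨by unfold bar at hzx ⊢; omega, hxC⟩
    · exact ⟨hx.2, by unfold bar; omega⟩
    · exact bar_bar (by have := (hC.2 x hx.1).2; omega)
    · exact bar_bar (by omega)

lemma freeCount_eq_card_Icc (hz : z ≤ n) (hzC : z ∈ C) :
    freeCount n C z = #{a ∈ Icc 1 z | a ∉ C ∧ bar n a ∉ C} := by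
  rw [freeCount]
  congr 1
  ext a
  rw [mem_filter, mem_filter, mem_range, mem_Icc, IsFree]
  constructor
  · rintro ⟨haz, ha1, -, haC, hbaC⟩
    exact ⟨⟨ha1, haz.le⟩, haC, hbaC⟩
  · rintro ⟨⟨ha1, haz⟩, haC, hbaC⟩
    exact ⟨haz.lt_of_ne (by rintro rfl; exact haC hzC), ha1, by omega, haC, hbaC⟩

lemma countP_Ilist_le (hz : z ≤ n) :
    (Ilist n C).countP (· ≤ z) = #{a ∈ Icc 1 z | a ∈ C ∧ bar n a ∈ C} := by
  rw [List.Nodup.countP_eq_card_filter ((Ilist_pairwise n C).imp ne_of_gt)]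
  congr 1
  ext a
  simp only [mem_filter, List.mem_toFinset, mem_Ilist, decide_eq_true_eq, mem_Icc]
  exact ⟨fun ⟨⟨ha1, _, haC, hbaC⟩, haz⟩ => ⟨⟨ha1, haz⟩, haC, hbaC⟩,
    fun ⟨⟨ha1, haz⟩, haC, hbaC⟩ => ⟨⟨ha1, haz.trans hz, haC, hbaC⟩, haz⟩⟩

lemma IsColumn.countP_window_add_freeCount (hC : IsColumn n C) (hz : z ∈ Ilist n C) :
    C.countP (fun x => decide (x ≤ z ∨ bar n z ≤ x)) + freeCount n C z =
      z + (Ilist n C).countP (· ≤ z) := by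
  obtain ⟨-, hzn, hzC, -⟩ := mem_Ilist.1 hz
  rw [hC.countP_window hzn, freeCount_eq_card_Icc hzn hzC, countP_Ilist_le hzn,
    Finset.card_filter_add_card_filter_add_card_filter_nor, Nat.card_Icc, Nat.add_sub_cancel]

lemma IsColumn.occ_iff (hC : IsColumn n C) :
    OCC n C ↔ ∀ z ∈ Ilist n C, (Ilist n C).countP (· ≤ z) ≤ freeCount n C z := by
  refine ⟨fun h z hz => ?_, fun h i hi1 hin hiC hbiC => ?_⟩
  · obtain ⟨hz1, hzn, hzC, hbzC⟩ := mem_Ilist.1 hz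
    have := h z hz1 hzn hzC hbzC
    have := hC.countP_window_add_freeCount hz
    omega
  · have hi : i ∈ Ilist n C := mem_Ilist.2 ⟨hi1, hin, hiC, hbiC⟩
    have := h i hi
    have := hC.countP_window_add_freeCount hi
    omega

end Window

/-- a column is admissible (satisfies the 1CC) iff it can be split. -/
theorem admissible_iff_canSplit (n : ℕ) (C : List ℕ) (hC : IsColumn n C) :
    OCC n C ↔ CanSplit n C :=
  hC.occ_iff.trans canSplit_iff.symm
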